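/- In the algebra of labeled ordered rooted trees, for F, E₁,…,Eₙ ∈ 𝔇 one has u(F; v(E₁),…,v(Eₙ)) = v(E₁)·u(F; v(E₂),…,v(Eₙ)) − Σ_{i=2}^{n} u(F; v(E₂),…,u(E_i; v(E₁)),…,v(Eₙ)) − t(v(E₁), u(F; v(E₂),…,v(Eₙ))). -/

import Mathlib

/-- An ordered labeled subtree: a node with a label and an ordered list of children. -/
inductive LSub (D : Type) : Type
  | mk : D → List (LSub D) → LSub D

/-- An ordered rooted tree with unlabeled root and non-root nodes labeled in `D`,
represented by the list of subtrees attached to the root. -/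
abbrev LTree (D : Type) := List (LSub D)

mutual
  /-- Number of nodes of a labeled subtree. -/
  def sizeS {D : Type} : LSub D → Nat
    | .mk _ ts => 1 + sizeL ts
  /-- Total number of (labeled) nodes of a forest. -/
  def sizeL {D : Type} : List (LSub D) → Nat
    | [] => 0
    | t :: ts => sizeS t + sizeL ts
end

mutual
  /-- Graft pending subtrees (given by `f`, indexed by the preorder index of nodes)
  onto a subtree whose own preorder index is `i`; attached subtrees are prepended. -/
  def graftS {D : Type} (f : Nat → List (LSub D)) (i : Nat) : LSub D → LSub D
    | .mk d ts => .mk d (f i ++ graftL f (i + 1) ts)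
  def graftL {D : Type} (f : Nat → List (LSub D)) (i : Nat) : List (LSub D) → List (LSub D)
    | [] => []
    | t :: ts => graftS f i t :: graftL f (i + sizeS t) ts
end

/-- Graft pending subtrees onto a tree; the root has preorder index `0`. -/
def graft {D : Type} (f : Nat → List (LSub D)) (t : LTree D) : LTree D :=
  f 0 ++ graftL f 1 t

/-- All lists of length `m` with entries `< n` (choices of attachment nodes). -/
def choices : Nat → Nat → List (List Nat)
  | 0, _ => [[]]
  | m + 1, n => (List.range n).flatMap fun c => (choices m n).map (c :: ·)

/-- The Grossman–Larson product of two basis trees, as an element of the free module: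
the sum over all ways of attaching the root-subtrees of `T1` to nodes of `T2`. -/
noncomputable def mulT (k : Type) [Semiring k] {D : Type} (T1 T2 : LTree D) :
    LTree D →₀ k :=
  ((choices T1.length (1 + sizeL T2)).map fun c =>
    Finsupp.single
      (graft (fun i => (T1.zip c).filterMap fun p => if p.2 = i then some p.1 else none) T2)
      (1 : k)).sum

/-- `v E`: the two-node tree whose single non-root node is labeled `E`. -/
def vT {D : Type} (E : D) : LTree D := [.mk E []]

/-- `u(E; T₁,…,T_k)`: root has one child labeled `E`, with which the roots of the `Tᵢ`
are identified. -/
def uT {D : Type} (E : D) (Ts : List (LTree D)) : LTree D := [.mk E Ts.flatten]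

/-- `t(T₁,…,T_k)`: identify the roots of the `Tᵢ`. -/
def tT {D : Type} (Ts : List (LTree D)) : LTree D := Ts.flatten

/-- All decompositions of an ordered multiset into a sub-multiset and its complement
(used for the coproduct). -/
def splits {α : Type} : List α → List (List α × List α)
  | [] => [([], [])]
  | a :: l => ((splits l).map fun p => (a :: p.1, p.2)) ++ ((splits l).map fun p => (p.1, a :: p.2))

/-- The labeled node of `T` at position `(i, p)`: the `i`-th root-subtree, then follow
the path `p` of child indices. -/
def subAtL {D : Type} : List (LSub D) → Nat → List Nat → Option (LSub D)
  | [], _, _ => none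
  | t :: _, 0, [] => some t
  | .mk _ cs :: _, 0, j :: p => subAtL cs j p
  | _ :: ts, i + 1, p => subAtL ts i p

/-- Replace the node of `T` at position `(i, p)`: relabel it with `G` and replace the
subtree rooted there (its list of children) by `T'`. -/
def replaceAtL {D : Type} (G : D) (T' : List (LSub D)) :
    List (LSub D) → Nat → List Nat → List (LSub D)
  | [], _, _ => []
  | _ :: ts, 0, [] => .mk G T' :: ts
  | .mk d cs :: ts, 0, j :: p => .mk d (replaceAtL G T' cs j p) :: ts
  | t :: ts, i + 1, p => t :: replaceAtL G T' ts i p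


/-! Multiplying by `v(E₁)` grafts the single leaf `E₁` onto one of the nodes of
`u(F; v(E₂),…,v(Eₙ))`: the root gives `t(v(E₁), u(F; …))`, the node `F` gives
`u(F; v(E₁),…,v(Eₙ))`, and the leaf `E_i` gives `u(F; …, u(E_i; v(E₁)), …)`. The identity is
this expansion of the product, rearranged. -/

section Grafting

variable {D : Type}

def LSub.leaf (E : D) : LSub D := .mk E []

/-- The grafting data that hangs `A` below the node of preorder index `c`. -/
def attachAt (A : LSub D) (c : Nat) : Nat → List (LSub D) :=
  fun i => if c = i then [A] else []

theorem attachAt_self (A : LSub D) (c : Nat) : attachAt A c c = [A] := if_pos rfl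

theorem attachAt_of_ne (A : LSub D) {c i : Nat} (h : c ≠ i) : attachAt A c i = [] := if_neg h

mutual
theorem graftS_eq_self (f : Nat → List (LSub D)) :
    ∀ (t : LSub D) (i : Nat), (∀ j, i ≤ j → f j = []) → graftS f i t = t
  | .mk d ts, i, hf => by
    rw [graftS, hf i le_rfl, graftL_eq_self f ts (i + 1) fun j hj => hf j (by omega)]
    rfl
theorem graftL_eq_self (f : Nat → List (LSub D)) :
    ∀ (ts : List (LSub D)) (i : Nat), (∀ j, i ≤ j → f j = []) → graftL f i ts = ts
  | [], _, _ => by rw [graftL]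
  | t :: ts, i, hf => by
    rw [graftL, graftS_eq_self f t i hf,
      graftL_eq_self f ts (i + sizeS t) fun j hj => hf j (by omega)]
end

theorem graft_singleton (f : Nat → List (LSub D)) (F : D) (ts : List (LSub D)) :
    graft f [.mk F ts] = f 0 ++ [.mk F (f 1 ++ graftL f 2 ts)] := by
  rw [graft, graftL, graftS, graftL]

theorem sizeS_leaf (E : D) : sizeS (LSub.leaf E) = 1 := rfl

theorem graftS_leaf (f : Nat → List (LSub D)) (i : Nat) (E : D) :
    graftS f i (.leaf E) = .mk E (f i) := by
  rw [LSub.leaf, graftS, graftL, List.append_nil]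

theorem sizeL_map_leaf (Es : List D) : sizeL (Es.map .leaf) = Es.length := by
  induction Es with
  | nil => rfl
  | cons E Es ih => rw [List.map_cons, sizeL, sizeS_leaf, ih, List.length_cons, Nat.add_comm]

/-- In a forest of leaves whose first leaf has preorder index `i`, the node of index `i + j`
is the `j`-th leaf. -/
theorem graftL_attachAt_map_leaf (A : LSub D) (Es : List D) (i j : Nat) (hj : j < Es.length) :
    graftL (attachAt A (i + j)) i (Es.map .leaf) = (Es.map .leaf).set j (.mk Es[j] [A]) := by
  induction Es generalizing i j with
  | nil => simp at hj
  | cons E Es ih =>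
    rw [List.map_cons, graftL, graftS_leaf, sizeS_leaf]
    cases j with
    | zero =>
      rw [Nat.add_zero, attachAt_self, graftL_eq_self _ _ _ fun m hm => attachAt_of_ne _ (by omega)]
      rfl
    | succ j =>
      rw [attachAt_of_ne _ (by omega), show i + (j + 1) = i + 1 + j by omega,
        ih (i + 1) j (Nat.lt_of_succ_lt_succ hj)]
      rfl

end Grafting

section Shapes

variable {D : Type}

theorem List.flatten_map_singleton {α : Type*} (l : List α) : (l.map ([·])).flatten = l := by
  rw [← List.flatMap_def, List.flatMap_singleton']

theorem map_vT_eq (Es : List D) : Es.map vT = (Es.map .leaf).map ([·]) := by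
  rw [List.map_map]
  rfl

theorem uT_map_vT (F : D) (Es : List D) : uT F (Es.map vT) = [.mk F (Es.map .leaf)] := by
  rw [uT, map_vT_eq, List.flatten_map_singleton]

theorem uT_set_map_vT (F E : D) (Es : List D) (j : Nat) (hj : j < Es.length) :
    uT F ((Es.map vT).set j (uT Es[j] [vT E])) =
      [.mk F ((Es.map .leaf).set j (.mk Es[j] [.leaf E]))] := by
  rw [uT, show uT Es[j] [vT E] = [.mk Es[j] [.leaf E]] from rfl, map_vT_eq, ← List.map_set,
    List.flatten_map_singleton]

end Shapes

section Product

variable (k : Type) [Semiring k] {D : Type}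

theorem choices_one (n : Nat) : choices 1 n = (List.range n).map ([·]) := by
  rw [choices, choices, List.map_eq_flatMap]
  rfl

theorem mulT_singleton (A : LSub D) (T : LTree D) :
    mulT k [A] T = ((List.range (1 + sizeL T)).map fun c =>
      Finsupp.single (graft (attachAt A c) T) (1 : k)).sum := by
  rw [mulT, List.length_singleton, choices_one, List.map_map]
  congr 2
  funext c
  simp only [Function.comp_apply, List.zip_cons_cons, List.zip_nil_left]
  congr 2
  funext i
  by_cases h : c = i <;> simp [attachAt, h]

theorem mulT_vT_uT_map_vT (F E₁ : D) (Es : List D) :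
    mulT k (vT E₁) (uT F (Es.map vT)) =
      Finsupp.single (tT [vT E₁, uT F (Es.map vT)]) (1 : k)
      + Finsupp.single (uT F (vT E₁ :: Es.map vT)) (1 : k)
      + ((List.finRange Es.length).map fun (i : Fin Es.length) =>
          Finsupp.single (uT F ((Es.map vT).set i.1 (uT (Es.get i) [vT E₁]))) (1 : k)).sum := by
  have hsize : 1 + sizeL (uT F (Es.map vT)) = 2 + Es.length := by
    rw [uT_map_vT, sizeL, sizeS, sizeL, sizeL_map_leaf]
    omega
  have at_root : graft (attachAt (.leaf E₁) 0) (uT F (Es.map vT)) =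
      tT [vT E₁, uT F (Es.map vT)] := by
    rw [uT_map_vT, graft_singleton, graftL_eq_self _ _ _ fun m hm => attachAt_of_ne _ (by omega)]
    rfl
  have at_F : graft (attachAt (.leaf E₁) 1) (uT F (Es.map vT)) = uT F (vT E₁ :: Es.map vT) := by
    rw [uT_map_vT, graft_singleton, graftL_eq_self _ _ _ fun m hm => attachAt_of_ne _ (by omega),
      ← List.map_cons, uT_map_vT]
    rfl
  have at_E (i : Fin Es.length) : graft (attachAt (.leaf E₁) (2 + i)) (uT F (Es.map vT)) =
      uT F ((Es.map vT).set i.1 (uT (Es.get i) [vT E₁])) := by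
    rw [uT_map_vT, graft_singleton, graftL_attachAt_map_leaf _ _ _ _ i.2, List.get_eq_getElem,
      uT_set_map_vT _ _ _ _ i.2, attachAt_of_ne _ (by omega), attachAt_of_ne _ (by omega)]
    rfl
  conv_lhs => rw [show vT E₁ = [.leaf E₁] from rfl, mulT_singleton, hsize, List.range_add,
    List.map_append, List.sum_append, show List.range 2 = [0, 1] from rfl, List.map_map,
    ← List.map_coe_finRange_eq_range, List.map_map]
  simp only [Function.comp_def, at_E, List.map_cons, List.map_nil, List.sum_cons, List.sum_nil,
    at_root, at_F, add_zero]

end Product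

/-- **Lemma (BrushEquation).** In the algebra of labeled ordered rooted trees, for
`F, E₁, …, Eₙ ∈ 𝔇` (here `E₁` and the list `Es = [E₂, …, Eₙ]`):
`u(F; v(E₁),…,v(Eₙ)) = v(E₁)·u(F; v(E₂),…,v(Eₙ))
  − Σ_{i=2}^{n} u(F; v(E₂),…,u(E_i; v(E₁)),…,v(Eₙ)) − t(v(E₁), u(F; v(E₂),…,v(Eₙ)))`. -/
theorem brushEquation (k D : Type) [Field k] (F E₁ : D) (Es : List D) :
    (Finsupp.single (uT F (vT E₁ :: Es.map vT)) (1 : k)) =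
      mulT k (vT E₁) (uT F (Es.map vT))
        - ((List.finRange Es.length).map fun (i : Fin Es.length) =>
            Finsupp.single (uT F ((Es.map vT).set i.1 (uT (Es.get i) [vT E₁]))) (1 : k)).sum
        - Finsupp.single (tT [vT E₁, uT F (Es.map vT)]) (1 : k) := by
  rw [mulT_vT_uT_map_vT]
  abel
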